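/- If S is a σ-approximate simulation relation of T1 by T2 whose projection onto Q1 contains the initial states of T1 and the observation maps are identities (Q1, Q2 ⊆ a common metric space and o = id), then the reachable set of T1 is contained in the closed σ-neighborhood of the reachable set of T2; consequently the one-sided Hausdorff distance from Reach(T1) to Reach(T2) is at most σ. -/
import Mathlib


variable {M : Type*} [PseudoMetricSpace M]

/-- States reachable from the initial set `Q0` under transition map `δ`. -/
inductive Reach (δ : M → Set M) (Q0 : Set M) : M → Prop
  | init : ∀ q ∈ Q0, Reach δ Q0 q
  | step : ∀ p q, Reach δ Q0 p → q ∈ δ p → Reach δ Q0 q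

/-- `S` is a σ-approximate simulation relation, for systems whose states live in a
common metric space `M` with identity observation maps. -/
def IsApproxSimRel (δ1 δ2 : M → Set M) (σ : ℝ) (S : Set (M × M)) : Prop :=
  ∀ q1 q2, (q1, q2) ∈ S →
    dist q1 q2 ≤ σ ∧ ∀ q1' ∈ δ1 q1, ∃ q2' ∈ δ2 q2, (q1', q2') ∈ S

theorem reach_subset_closed_thickening
    (δ1 δ2 : M → Set M) (Q01 Q02 : Set M) (σ : ℝ) (S : Set (M × M))
    (hS : IsApproxSimRel δ1 δ2 σ S)
    (hinit : ∀ q1 ∈ Q01, ∃ q2 ∈ Q02, (q1, q2) ∈ S) :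
    ({q | Reach δ1 Q01 q} ⊆ {x | ∃ y, Reach δ2 Q02 y ∧ dist x y ≤ σ}) ∧
    ⨆ x ∈ {q | Reach δ1 Q01 q}, ⨅ y ∈ {q | Reach δ2 Q02 q}, (edist x y) ≤
      ENNReal.ofReal σ := by
  have key : ∀ q1, Reach δ1 Q01 q1 → ∃ q2, Reach δ2 Q02 q2 ∧ (q1, q2) ∈ S := by
    intro q1 h
    induction h with
    | init q hq =>
      obtain ⟨q2, hq2, hSq⟩ := hinit q hq
      exact ⟨q2, Reach.init q2 hq2, hSq⟩
    | step p q _ hq ih =>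
      obtain ⟨p2, hp2, hSp⟩ := ih
      obtain ⟨q2, hq2, hSq⟩ := (hS p p2 hSp).2 q hq
      exact ⟨q2, Reach.step p2 q2 hp2 hq2, hSq⟩
  constructor
  · intro x hx
    obtain ⟨y, hy, hSxy⟩ := key x hx
    exact ⟨y, hy, (hS x y hSxy).1⟩
  · apply iSup₂_le
    intro x hx
    obtain ⟨y, hy, hSxy⟩ := key x hx
    refine le_trans (iInf₂_le y hy) ?_
    rw [edist_dist]
    exact ENNReal.ofReal_le_ofReal (hS x y hSxy).1
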